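/- Suppose $E, A, B : [0,T] \to [0,\infty)$ are continuous functions satisfying: (i) $E(t) \le E(0) + c_1 A(t) + c_1 B(t)$, (ii) $B(t)^2 \le c_2 + 3E(t) + c_2 A(t)$, and (iii) $A(t)^2 \le c_3 B(t) + c_3 + 2E(t) + c_3 E(t)^{\frac{p+2}{2}}$ for constants $c_1,c_2,c_3 \ge 0$ and $0 < p < 2$. Then there exists a constant $M < \infty$ (depending only on $c_1,c_2,c_3,p,E(0)$) such that $E(t) \le M$ for all $t \in [0,T]$. -/

import Mathlib

/-!
Fix a time `t` and put `X = max (E t) (A t) (B t) 1`, `ρ = (p + 2) / 2 ∈ [1, 2)`. Since `X ≥ 1`,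
every term on the right of (ii) and (iii) is at most a constant times `X ^ ρ`, so `A t` and `B t`
are `O(X ^ (ρ / 2))`, and then (i) gives `X ≤ K * X ^ (ρ / 2)`. As `ρ / 2 < 1`, the power of `X`
is absorbed into the left side: `X ≤ K ^ (1 - ρ / 2)⁻¹`, a bound independent of `t` and `T`.
-/

open Real

lemma le_rpow_inv_of_le_mul_rpow {X K s : ℝ} (hX : 0 < X) (hs : s < 1)
    (h : X ≤ K * X ^ s) : X ≤ K ^ (1 - s)⁻¹ := by
  have hpow : X ^ (1 - s) ≤ K := by
    rw [rpow_sub hX, rpow_one, div_le_iff₀ (rpow_pos_of_pos hX s)]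
    exact h
  have hK : 0 ≤ K := (rpow_nonneg hX.le _).trans hpow
  exact (le_rpow_inv_iff_of_pos hX.le hK (by linarith)).2 hpow

lemma le_sqrt_mul_rpow_half_of_sq_le {a C X ρ : ℝ} (hX : 0 ≤ X)
    (h : a ^ 2 ≤ C * X ^ ρ) : a ≤ √C * X ^ (ρ / 2) := by
  have hY : X ^ (ρ / 2) = √(X ^ ρ) := by rw [sqrt_eq_rpow, ← rpow_mul hX]; ring_nf
  rw [hY, ← sqrt_mul' C (rpow_nonneg hX ρ)]
  exact le_sqrt_of_sq_le h

/-- The bound `M` of the theorem, written with `ρ = (p + 2) / 2`. -/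
noncomputable def bootstrapBound (c₁ c₂ c₃ E₀ ρ : ℝ) : ℝ :=
  (1 + E₀ + (1 + c₁) * (√(3 * c₃ + 2) + √(2 * c₂ + 3))) ^ (1 - ρ / 2)⁻¹

lemma le_bootstrapBound {c₁ c₂ c₃ E₀ ρ e a b : ℝ} (hc₁ : 0 ≤ c₁) (hc₂ : 0 ≤ c₂)
    (hc₃ : 0 ≤ c₃) (hE₀ : 0 ≤ E₀) (hρ₁ : 1 ≤ ρ) (hρ₂ : ρ < 2) (he : 0 ≤ e)
    (h₁ : e ≤ E₀ + c₁ * a + c₁ * b) (h₂ : b ^ 2 ≤ c₂ + 3 * e + c₂ * a)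
    (h₃ : a ^ 2 ≤ c₃ * b + c₃ + 2 * e + c₃ * e ^ ρ) :
    e ≤ bootstrapBound c₁ c₂ c₃ E₀ ρ := by
  set X := max e (max a (max b 1))
  have heX : e ≤ X := le_max_left _ _
  have haX : a ≤ X := (le_max_left _ _).trans (le_max_right _ _)
  have hbX : b ≤ X := ((le_max_left _ _).trans (le_max_right _ _)).trans (le_max_right _ _)
  have h1X : 1 ≤ X := ((le_max_right _ _).trans (le_max_right _ _)).trans (le_max_right _ _)
  have hXρ : X ≤ X ^ ρ := self_le_rpow_of_one_le h1X hρ₁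
  have h1Xρ : 1 ≤ X ^ ρ := h1X.trans hXρ
  have heρ : e ^ ρ ≤ X ^ ρ := rpow_le_rpow he heX (by linarith)
  have hb₂ : b ^ 2 ≤ (2 * c₂ + 3) * X ^ ρ := by
    nlinarith [mul_le_mul_of_nonneg_left h1Xρ hc₂, mul_le_mul_of_nonneg_left (haX.trans hXρ) hc₂]
  have ha₂ : a ^ 2 ≤ (3 * c₃ + 2) * X ^ ρ := by
    nlinarith [mul_le_mul_of_nonneg_left h1Xρ hc₃, mul_le_mul_of_nonneg_left (hbX.trans hXρ) hc₃,
      mul_le_mul_of_nonneg_left heρ hc₃]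
  set α := √(3 * c₃ + 2)
  set β := √(2 * c₂ + 3)
  set Y := X ^ (ρ / 2)
  have haY : a ≤ α * Y := le_sqrt_mul_rpow_half_of_sq_le (by linarith) ha₂
  have hbY : b ≤ β * Y := le_sqrt_mul_rpow_half_of_sq_le (by linarith) hb₂
  have h1Y : 1 ≤ Y := one_le_rpow h1X (by linarith)
  have hαY : 0 ≤ α * Y := by positivity
  have hβY : 0 ≤ β * Y := by positivity
  have hXY : X ≤ (1 + E₀ + (1 + c₁) * (α + β)) * Y := by
    have hE₀Y : E₀ ≤ E₀ * Y := le_mul_of_one_le_right hE₀ h1Y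
    refine max_le ?_ (max_le ?_ (max_le ?_ ?_)) <;>
      nlinarith [mul_le_mul_of_nonneg_left haY hc₁, mul_le_mul_of_nonneg_left hbY hc₁]
  exact heX.trans (le_rpow_inv_of_le_mul_rpow (by linarith) (by linarith) hXY)

/-- Nonlinear bootstrap: if continuous nonnegative functions `E, A, B` on `[0,T]` satisfy
(i) `E(t) ≤ E(0) + c₁A(t) + c₁B(t)`, (ii) `B(t)² ≤ c₂ + 3E(t) + c₂A(t)`, and
(iii) `A(t)² ≤ c₃B(t) + c₃ + 2E(t) + c₃E(t)^{(p+2)/2}` with `0 < p < 2`, then `E` is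
bounded by a constant `M` depending only on `c₁, c₂, c₃, p` and a bound `E₀` on `E(0)`. -/
theorem bootstrap_bound (c1 c2 c3 p E0 : ℝ) (hc1 : 0 ≤ c1) (hc2 : 0 ≤ c2) (hc3 : 0 ≤ c3)
    (hp0 : 0 < p) (hp2 : p < 2) :
    ∃ M : ℝ, ∀ (T : ℝ) (E A B : ℝ → ℝ), 0 < T →
      ContinuousOn E (Set.Icc 0 T) → ContinuousOn A (Set.Icc 0 T) →
      ContinuousOn B (Set.Icc 0 T) →
      (∀ t ∈ Set.Icc (0:ℝ) T, 0 ≤ E t ∧ 0 ≤ A t ∧ 0 ≤ B t) →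
      (∀ t ∈ Set.Icc (0:ℝ) T, E t ≤ E 0 + c1 * A t + c1 * B t) →
      (∀ t ∈ Set.Icc (0:ℝ) T, B t ^ 2 ≤ c2 + 3 * E t + c2 * A t) →
      (∀ t ∈ Set.Icc (0:ℝ) T, A t ^ 2 ≤ c3 * B t + c3 + 2 * E t + c3 * E t ^ ((p + 2)/2)) →
      E 0 ≤ E0 →
      ∀ t ∈ Set.Icc (0:ℝ) T, E t ≤ M := by
  refine ⟨bootstrapBound c1 c2 c3 E0 ((p + 2) / 2), ?_⟩
  intro T E A B hT _ _ _ hpos h1 h2 h3 hE0 t ht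
  have hE0_nonneg : 0 ≤ E0 := (hpos 0 ⟨le_rfl, hT.le⟩).1.trans hE0
  exact le_bootstrapBound hc1 hc2 hc3 hE0_nonneg (by linarith) (by linarith) (hpos t ht).1
    ((h1 t ht).trans (by linarith)) (h2 t ht) (h3 t ht)
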